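/- arXiv:2210.00935 — 4 statements merged into one kernel-verified Lean document; each statement's English description precedes it below -/
import Mathlib

section
/- Under each of the three generating fundamental symmetries ε², ε¹, ε⁶ the half-angle coordinates transform by a single sign flip: for every p = (x,y,θ) ∈ ℝ³ one has (b¹,b²,b³)(ε²(p)) = (−b¹(p), b²(p), b³(p)), (b¹,b²,b³)(ε¹(p)) = (b¹(p), −b²(p), b³(p)), and (b¹,b²,b³)(ε⁶(p)) = (b¹(p), b²(p), −b³(p)). Consequently, for θ ∈ (−π,π) the logarithmic coordinates (c¹,c²,c³) flip signs in exactly the same manner under ε², ε¹, ε⁶. -/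
open Real Set

noncomputable section

/-- Points of `ℝ³` in coordinates `(x, y, θ)`. -/
abbrev Pt : Type := ℝ × ℝ × ℝ

def ptX (p : Pt) : ℝ := p.1
def ptY (p : Pt) : ℝ := p.2.1
def ptTheta (p : Pt) : ℝ := p.2.2

/-- Half-angle coordinate `b¹`. -/
def b1 (p : Pt) : ℝ := ptX p * Real.cos (ptTheta p / 2) + ptY p * Real.sin (ptTheta p / 2)
/-- Half-angle coordinate `b²`. -/
def b2 (p : Pt) : ℝ := -ptX p * Real.sin (ptTheta p / 2) + ptY p * Real.cos (ptTheta p / 2)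
/-- Half-angle coordinate `b³`. -/
def b3 (p : Pt) : ℝ := ptTheta p

/-- `sinc u = sin u / u`, with `sinc 0 = 1`. -/
def sinc (u : ℝ) : ℝ := if u = 0 then 1 else Real.sin u / u

/-- Logarithmic coordinate `c¹`. -/
def c1 (p : Pt) : ℝ := b1 p / _root_.sinc (ptTheta p / 2)
/-- Logarithmic coordinate `c²`. -/
def c2 (p : Pt) : ℝ := b2 p / _root_.sinc (ptTheta p / 2)
/-- Logarithmic coordinate `c³`. -/
def c3 (p : Pt) : ℝ := ptTheta p

/-- Fundamental symmetry `ε²`. -/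
def eps2 (p : Pt) : Pt :=
  (-ptX p * Real.cos (ptTheta p) - ptY p * Real.sin (ptTheta p),
    -ptX p * Real.sin (ptTheta p) + ptY p * Real.cos (ptTheta p), ptTheta p)

/-- Fundamental symmetry `ε¹`. -/
def eps1 (p : Pt) : Pt :=
  (ptX p * Real.cos (ptTheta p) + ptY p * Real.sin (ptTheta p),
    ptX p * Real.sin (ptTheta p) - ptY p * Real.cos (ptTheta p), ptTheta p)

/-- Fundamental symmetry `ε⁶`. -/
def eps6 (p : Pt) : Pt :=
  (ptX p * Real.cos (ptTheta p) + ptY p * Real.sin (ptTheta p),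
    -ptX p * Real.sin (ptTheta p) + ptY p * Real.cos (ptTheta p), -ptTheta p)

/-- `γ` is piecewise `C¹` on `[a,b]`: continuous on `[a,b]` and differentiable away from
finitely many points. -/
def PiecewiseC1On (γ : ℝ → Pt) (a b : ℝ) : Prop :=
  ContinuousOn γ (Set.Icc a b) ∧
    ∃ S : Finset ℝ, ∀ s ∈ Set.Icc a b, s ∉ S → DifferentiableAt ℝ γ s

/-- The Riemannian speed `‖γ̇(s)‖` of a curve w.r.t. the left-invariant metric with
parameters `w₁, w₂, w₃`. -/
def speed (w₁ w₂ w₃ : ℝ) (γ : ℝ → Pt) (s : ℝ) : ℝ :=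
  Real.sqrt
    (w₁ ^ 2 * (Real.cos (ptTheta (γ s)) * deriv (fun t => ptX (γ t)) s
        + Real.sin (ptTheta (γ s)) * deriv (fun t => ptY (γ t)) s) ^ 2
      + w₂ ^ 2 * (-Real.sin (ptTheta (γ s)) * deriv (fun t => ptX (γ t)) s
        + Real.cos (ptTheta (γ s)) * deriv (fun t => ptY (γ t)) s) ^ 2
      + w₃ ^ 2 * (deriv (fun t => ptTheta (γ t)) s) ^ 2)

/-- Riemannian length of the curve `γ : [a,b] → ℝ³`. -/
def rLength (w₁ w₂ w₃ : ℝ) (γ : ℝ → Pt) (a b : ℝ) : ℝ := ∫ s in a..b, speed w₁ w₂ w₃ γ s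

/-- `γ t` reaches `q` up to a multiple of `2π` in the angular variable. -/
def EndsAt (γ : ℝ → Pt) (t : ℝ) (q : Pt) : Prop :=
  ∃ k : ℤ, γ t = (ptX q, ptY q, ptTheta q + 2 * Real.pi * (k : ℝ))

/-- Exact Riemannian distance from the origin. -/
def rDist (w₁ w₂ w₃ : ℝ) (p : Pt) : ℝ :=
  sInf { l : ℝ | ∃ γ : ℝ → Pt, PiecewiseC1On γ 0 1 ∧ γ 0 = ((0 : ℝ), (0 : ℝ), (0 : ℝ)) ∧
    EndsAt γ 1 p ∧ l = rLength w₁ w₂ w₃ γ 0 1 }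

/-- A curve is horizontal: no sideways (`A₂`) motion. -/
def Horizontal (γ : ℝ → Pt) (a b : ℝ) : Prop :=
  ∀ s ∈ Set.Icc a b,
    -Real.sin (ptTheta (γ s)) * deriv (fun t => ptX (γ t)) s
      + Real.cos (ptTheta (γ s)) * deriv (fun t => ptY (γ t)) s = 0

/-- Sub-Riemannian distance from the origin, valued in `[0,∞]`. -/
def srDist (w₁ w₂ w₃ : ℝ) (p : Pt) : ENNReal :=
  sInf { l : ENNReal | ∃ γ : ℝ → Pt, PiecewiseC1On γ 0 1 ∧ Horizontal γ 0 1 ∧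
    γ 0 = ((0 : ℝ), (0 : ℝ), (0 : ℝ)) ∧ EndsAt γ 1 p ∧
    l = ENNReal.ofReal (rLength w₁ w₂ w₃ γ 0 1) }

/-- Half-angle distance approximation `ρ_b`. -/
def rhoB (w₁ w₂ w₃ : ℝ) (p : Pt) : ℝ :=
  Real.sqrt ((w₁ * b1 p) ^ 2 + (w₂ * b2 p) ^ 2 + (w₃ * b3 p) ^ 2)

/-- Logarithmic distance approximation `ρ_c`. -/
def rhoC (w₁ w₂ w₃ : ℝ) (p : Pt) : ℝ :=
  Real.sqrt ((w₁ * c1 p) ^ 2 + (w₂ * c2 p) ^ 2 + (w₃ * c3 p) ^ 2)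

/-- Lower bound `l`. -/
def lBnd (w₁ w₃ : ℝ) (p : Pt) : ℝ :=
  Real.sqrt ((w₁ * ptX p) ^ 2 + (w₁ * ptY p) ^ 2 + (w₃ * ptTheta p) ^ 2)

/-- Upper bound `u₁`. -/
def u1Bnd (w₂ w₃ : ℝ) (p : Pt) : ℝ :=
  Real.sqrt ((w₂ * ptX p) ^ 2 + (w₂ * ptY p) ^ 2 + (w₃ * ptTheta p) ^ 2)

/-- Upper bound `u₂`. -/
def u2Bnd (w₁ w₃ : ℝ) (p : Pt) : ℝ :=
  w₁ * Real.sqrt (ptX p ^ 2 + ptY p ^ 2) + w₃ * Real.pi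

/-- Exact morphological kernel `k = (t/β)(d/t)^β`. -/
def kerExact (w₁ w₂ w₃ t β : ℝ) (p : Pt) : ℝ := (t / β) * (rDist w₁ w₂ w₃ p / t) ^ β

/-- Approximative morphological kernel `k_b = (t/β)(ρ_b/t)^β`. -/
def kerB (w₁ w₂ w₃ t β : ℝ) (p : Pt) : ℝ := (t / β) * (rhoB w₁ w₂ w₃ p / t) ^ β

/-- Left-invariant derivative `A₁ f = cos θ ∂ₓ f + sin θ ∂_y f`. -/
def A1d (f : Pt → ℝ) (p : Pt) : ℝ :=
  Real.cos (ptTheta p) * deriv (fun x => f (x, ptY p, ptTheta p)) (ptX p)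
    + Real.sin (ptTheta p) * deriv (fun y => f (ptX p, y, ptTheta p)) (ptY p)

/-- Left-invariant derivative `A₂ f = -sin θ ∂ₓ f + cos θ ∂_y f`. -/
def A2d (f : Pt → ℝ) (p : Pt) : ℝ :=
  -Real.sin (ptTheta p) * deriv (fun x => f (x, ptY p, ptTheta p)) (ptX p)
    + Real.cos (ptTheta p) * deriv (fun y => f (ptX p, y, ptTheta p)) (ptY p)

/-- Left-invariant derivative `A₃ f = ∂_θ f`. -/
def A3d (f : Pt → ℝ) (p : Pt) : ℝ := deriv (fun θ => f (ptX p, ptY p, θ)) (ptTheta p)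

/-- Squared dual norm of the differential of `ρ_b`:
`‖dρ_b‖_*² = w₁⁻²(A₁ρ_b)² + w₂⁻²(A₂ρ_b)² + w₃⁻²(A₃ρ_b)²`. -/
def dualNormSq (w₁ w₂ w₃ : ℝ) (p : Pt) : ℝ :=
  w₁⁻¹ ^ 2 * (A1d (rhoB w₁ w₂ w₃) p) ^ 2 + w₂⁻¹ ^ 2 * (A2d (rhoB w₁ w₂ w₃) p) ^ 2
    + w₃⁻¹ ^ 2 * (A3d (rhoB w₁ w₂ w₃) p) ^ 2

/-- Exact Riemannian distance between two points, as an infimum over curves `[0,t] → ℝ³`. -/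
def rDist2 (w₁ w₂ w₃ t : ℝ) (p q : Pt) : ℝ :=
  sInf { l : ℝ | ∃ γ : ℝ → Pt, PiecewiseC1On γ 0 t ∧ γ 0 = p ∧ EndsAt γ t q ∧
    l = rLength w₁ w₂ w₃ γ 0 t }

/-! With `R α` the rotation by `α`, the half-angle coordinates are `(b¹, b²) = R (-θ/2) (x, y)`.
`ε⁶` rotates `(x, y)` by `-θ` and negates `θ`, so `(b¹, b²) (ε⁶ p) = R (θ/2) (R (-θ) (x, y))`, which
is `(b¹, b²) p`. `ε¹` is the reflection in the line of angle `θ/2`, i.e. `b² ↦ -b²` in the rotated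
frame, and on the plane `ε² = -ε¹`. As `sinc` is even, the logarithmic coordinates flip alike. -/

theorem sinc_eq_real_sinc : _root_.sinc = Real.sinc := rfl

theorem cos_mul_cos_half_add_sin_mul_sin_half (θ : ℝ) :
    cos θ * cos (θ / 2) + sin θ * sin (θ / 2) = cos (θ / 2) := by
  rw [← cos_sub, sub_half]

theorem sin_mul_cos_half_sub_cos_mul_sin_half (θ : ℝ) :
    sin θ * cos (θ / 2) - cos θ * sin (θ / 2) = sin (θ / 2) := by
  rw [← sin_sub, sub_half]

section Symmetries

variable (p : Pt)

theorem ptTheta_eps1 : ptTheta (eps1 p) = ptTheta p := rfl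

theorem ptTheta_eps2 : ptTheta (eps2 p) = ptTheta p := rfl

theorem ptTheta_eps6 : ptTheta (eps6 p) = -ptTheta p := rfl

theorem b1_eps1 : b1 (eps1 p) = b1 p := by
  obtain ⟨x, y, θ⟩ := p
  simp only [b1, eps1, ptX, ptY, ptTheta]
  linear_combination x * cos_mul_cos_half_add_sin_mul_sin_half θ +
    y * sin_mul_cos_half_sub_cos_mul_sin_half θ

theorem b2_eps1 : b2 (eps1 p) = -b2 p := by
  obtain ⟨x, y, θ⟩ := p
  simp only [b2, eps1, ptX, ptY, ptTheta]
  linear_combination x * sin_mul_cos_half_sub_cos_mul_sin_half θ -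
    y * cos_mul_cos_half_add_sin_mul_sin_half θ

theorem b1_eps2 : b1 (eps2 p) = -b1 p := by
  rw [← b1_eps1 p]
  simp only [b1, eps1, eps2, ptX, ptY, ptTheta]
  ring

theorem b2_eps2 : b2 (eps2 p) = b2 p := by
  rw [← neg_neg (b2 p), ← b2_eps1 p]
  simp only [b2, eps1, eps2, ptX, ptY, ptTheta]
  ring

theorem b1_eps6 : b1 (eps6 p) = b1 p := by
  obtain ⟨x, y, θ⟩ := p
  simp only [b1, eps6, ptX, ptY, ptTheta, neg_div, cos_neg, sin_neg]
  linear_combination x * cos_mul_cos_half_add_sin_mul_sin_half θ +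
    y * sin_mul_cos_half_sub_cos_mul_sin_half θ

theorem b2_eps6 : b2 (eps6 p) = b2 p := by
  obtain ⟨x, y, θ⟩ := p
  simp only [b2, eps6, ptX, ptY, ptTheta, neg_div, cos_neg, sin_neg]
  linear_combination y * cos_mul_cos_half_add_sin_mul_sin_half θ -
    x * sin_mul_cos_half_sub_cos_mul_sin_half θ

end Symmetries

theorem half_angle_and_log_coordinates_flip_under_symmetries :
    (∀ p : Pt,
        b1 (eps2 p) = -b1 p ∧ b2 (eps2 p) = b2 p ∧ b3 (eps2 p) = b3 p ∧
        b1 (eps1 p) = b1 p ∧ b2 (eps1 p) = -b2 p ∧ b3 (eps1 p) = b3 p ∧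
        b1 (eps6 p) = b1 p ∧ b2 (eps6 p) = b2 p ∧ b3 (eps6 p) = -b3 p) ∧
    (∀ p : Pt, ptTheta p ∈ Set.Ioo (-Real.pi) Real.pi →
        c1 (eps2 p) = -c1 p ∧ c2 (eps2 p) = c2 p ∧ c3 (eps2 p) = c3 p ∧
        c1 (eps1 p) = c1 p ∧ c2 (eps1 p) = -c2 p ∧ c3 (eps1 p) = c3 p ∧
        c1 (eps6 p) = c1 p ∧ c2 (eps6 p) = c2 p ∧ c3 (eps6 p) = -c3 p) := by
  refine ⟨fun p => ⟨b1_eps2 p, b2_eps2 p, rfl, b1_eps1 p, b2_eps1 p, rfl,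
    b1_eps6 p, b2_eps6 p, rfl⟩, fun p _ => ?_⟩
  simp only [c1, c2, c3, b1_eps1, b2_eps1, b1_eps2, b2_eps2, b1_eps6, b2_eps6,
    ptTheta_eps1, ptTheta_eps2, ptTheta_eps6, neg_div, sinc_eq_real_sinc, Real.sinc_neg,
    and_self]

end
end

section
/- Fixed-point characterisation of the fundamental symmetries: for every p = (x,y,θ) ∈ ℝ³ one has ε²(p) = p if and only if b¹(p) = 0, and ε¹(p) = p if and only if b²(p) = 0; moreover, if θ ∈ (−π,π), then ε⁶(p) = p if and only if b³(p) = 0, i.e. θ = 0. -/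
open Real Set

noncomputable section

/- In the `(x, y)` plane, `ε²` and `ε¹` are the reflections in the lines orthogonal to the unit
vectors `(cos (θ/2), sin (θ/2))` and `(sin (θ/2), -cos (θ/2))`, along which `b¹` and `b²` are
the coordinates; so their fixed points are where that coordinate vanishes. -/

theorem eps2_eq (p : Pt) :
    eps2 p = (ptX p - 2 * b1 p * cos (ptTheta p / 2),
      ptY p - 2 * b1 p * sin (ptTheta p / 2), ptTheta p) := by
  obtain ⟨x, y, θ⟩ := p
  obtain ⟨φ, rfl⟩ : ∃ φ, θ = 2 * φ := ⟨θ / 2, by ring⟩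
  simp only [eps2, b1, ptX, ptY, ptTheta, mul_div_cancel_left₀ φ two_ne_zero, cos_two_mul,
    sin_two_mul, Prod.mk.injEq, and_true]
  exact ⟨by ring, by linear_combination (2 * y) * sin_sq_add_cos_sq φ⟩

theorem eps1_eq (p : Pt) :
    eps1 p = (ptX p + 2 * b2 p * sin (ptTheta p / 2),
      ptY p - 2 * b2 p * cos (ptTheta p / 2), ptTheta p) := by
  obtain ⟨x, y, θ⟩ := p
  obtain ⟨φ, rfl⟩ : ∃ φ, θ = 2 * φ := ⟨θ / 2, by ring⟩
  simp only [eps1, b2, ptX, ptY, ptTheta, mul_div_cancel_left₀ φ two_ne_zero, cos_two_mul,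
    sin_two_mul, Prod.mk.injEq, and_true]
  exact ⟨by linear_combination (2 * x) * sin_sq_add_cos_sq φ, by ring⟩

theorem mul_cos_eq_zero_and_mul_sin_eq_zero_iff {a t : ℝ} :
    a * cos t = 0 ∧ a * sin t = 0 ↔ a = 0 := by
  refine ⟨fun ⟨hc, hs⟩ => ?_, fun ha => by simp [ha]⟩
  have : a ^ 2 = 0 := by
    linear_combination (a * cos t) * hc + (a * sin t) * hs - a ^ 2 * sin_sq_add_cos_sq t
  exact pow_eq_zero_iff two_ne_zero |>.mp this

theorem eps2_eq_self_iff (p : Pt) : eps2 p = p ↔ b1 p = 0 := by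
  obtain ⟨x, y, θ⟩ := p
  rw [eps2_eq]
  simp only [ptX, ptY, ptTheta, Prod.mk.injEq, sub_eq_self, and_true]
  rw [mul_cos_eq_zero_and_mul_sin_eq_zero_iff, mul_eq_zero, or_iff_right two_ne_zero]

theorem eps1_eq_self_iff (p : Pt) : eps1 p = p ↔ b2 p = 0 := by
  obtain ⟨x, y, θ⟩ := p
  rw [eps1_eq]
  simp only [ptX, ptY, ptTheta, Prod.mk.injEq, add_eq_left, sub_eq_self, and_true]
  rw [and_comm, mul_cos_eq_zero_and_mul_sin_eq_zero_iff, mul_eq_zero, or_iff_right two_ne_zero]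

theorem eps6_eq_self_iff (p : Pt) : eps6 p = p ↔ ptTheta p = 0 := by
  obtain ⟨x, y, θ⟩ := p
  simp only [eps6, ptX, ptY, ptTheta, Prod.mk.injEq]
  refine ⟨fun ⟨_, _, h⟩ => by linarith, ?_⟩
  rintro rfl
  simp

theorem fixed_points_of_fundamental_symmetries (p : Pt) :
    (eps2 p = p ↔ b1 p = 0) ∧ (eps1 p = p ↔ b2 p = 0) ∧
    (ptTheta p ∈ Set.Ioo (-Real.pi) Real.pi → (eps6 p = p ↔ b3 p = 0)) :=
  ⟨eps2_eq_self_iff p, eps1_eq_self_iff p, fun _ => eps6_eq_self_iff p⟩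

end
end

section
/- A point p = (x,y,θ) ∈ ℝ³ with θ ∈ (−π,π) satisfies b²(p) = 0 if and only if p lies in the image of the SE(2) exponential map restricted to span{A₁,A₃}, i.e. if and only if there exists c¹ ∈ ℝ such that x = c¹ cos(θ/2) sinc(θ/2) and y = c¹ sin(θ/2) sinc(θ/2). -/
open Real Set

noncomputable section

/-! `b² p = 0` says that `(x, y)` is orthogonal to `(-sin (θ/2), cos (θ/2))`, i.e. parallel to the
unit vector `(cos (θ/2), sin (θ/2))`. For `|θ| < π` the factor `sinc (θ/2)` is nonzero, so it can be
absorbed into the coefficient `c¹`. -/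

lemma sinc_pos_of_abs_lt_pi {u : ℝ} (hu : |u| < π) : 0 < _root_.sinc u := by
  rw [_root_.sinc]
  split_ifs with hu0
  · exact one_pos
  · have hpos : 0 < sin |u| / |u| :=
      div_pos (sin_pos_of_pos_of_lt_pi (abs_pos.2 hu0) hu) (abs_pos.2 hu0)
    rcases abs_choice u with habs | habs <;> rw [habs] at hpos
    · exact hpos
    · rwa [sin_neg, neg_div_neg_eq] at hpos

lemma neg_mul_add_mul_eq_zero_iff_exists {x y c s k : ℝ} (hcs : c ^ 2 + s ^ 2 = 1)
    (hk : k ≠ 0) : -x * s + y * c = 0 ↔ ∃ a : ℝ, x = a * c * k ∧ y = a * s * k := by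
  constructor
  · intro hperp
    refine ⟨(x * c + y * s) / k, ?_, ?_⟩
    · field_simp
      linear_combination (-x) * hcs - s * hperp
    · field_simp
      linear_combination (-y) * hcs + c * hperp
  · rintro ⟨a, rfl, rfl⟩
    ring

theorem cocircular_iff_exp_span_A1_A3 (p : Pt)
    (h : ptTheta p ∈ Set.Ioo (-Real.pi) Real.pi) :
    b2 p = 0 ↔ ∃ cc : ℝ,
      ptX p = cc * Real.cos (ptTheta p / 2) * _root_.sinc (ptTheta p / 2) ∧
      ptY p = cc * Real.sin (ptTheta p / 2) * _root_.sinc (ptTheta p / 2) := by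
  have hhalf : |ptTheta p / 2| < π := by
    rw [abs_lt]
    constructor <;> linarith [h.1, h.2, pi_pos]
  exact neg_mul_add_mul_eq_zero_iff_exists (cos_sq_add_sin_sq _)
    (sinc_pos_of_abs_lt_pi hhalf).ne'

end
end

section
/- Second global upper bound on the exact distance: for every p = (x,y,θ) ∈ ℝ² × [−π,π] one has d(p) ≤ u₂(p) := w₁√(x² + y²) + w₃π. -/
open Real Set

noncomputable section

/-! Turn in place to a heading `φ` parallel to `(x, y)`, drive straight to `(x, y)`, then turn
to `θ`. The straight part costs `w₁ √(x² + y²)` and the two turns cost `w₃ (|φ| + |θ - φ|)`.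
Since `φ` is only determined modulo `π`, it can be chosen in the interval
`[(θ - π)/2, (θ + π)/2]`, where `|φ| + |θ - φ| ≤ π` as soon as `|θ| ≤ π`. -/

open Filter Topology intervalIntegral

lemma abs_add_abs_sub_le_of_abs_le {θ φ c : ℝ} (hθ : |θ| ≤ c) (h₁ : θ - c ≤ 2 * φ)
    (h₂ : 2 * φ ≤ θ + c) : |φ| + |θ - φ| ≤ c := by
  rw [abs_le] at hθ
  rcases abs_cases φ with ⟨hφ, -⟩ | ⟨hφ, -⟩ <;> rcases abs_cases (θ - φ) with ⟨h, -⟩ | ⟨h, -⟩ <;>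
    linarith

lemma exists_polar_angle_mem_Ico (x y a : ℝ) :
    ∃ r φ, x = r * cos φ ∧ y = r * sin φ ∧ φ ∈ Ico a (a + π) := by
  set z : ℂ := ⟨x, y⟩
  set n := toIcoDiv pi_pos a z.arg
  have hsign : ((-1 : ℝ) ^ n) ^ 2 = 1 := by rw [← sq_abs, abs_neg_one_zpow, one_pow]
  refine ⟨(-1) ^ n * ‖z‖, toIcoMod pi_pos a z.arg, ?_, ?_, toIcoMod_mem_Ico _ _ _⟩
  · rw [← self_sub_toIcoDiv_zsmul, zsmul_eq_mul, cos_sub_int_mul_pi]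
    linear_combination (-Complex.norm_mul_cos_arg z) - ‖z‖ * cos z.arg * hsign
  · rw [← self_sub_toIcoDiv_zsmul, zsmul_eq_mul, sin_sub_int_mul_pi]
    linear_combination (-Complex.norm_mul_sin_arg z) - ‖z‖ * sin z.arg * hsign

lemma intervalIntegrable_of_eqOn_Ioo {f : ℝ → ℝ} {a b c : ℝ} (hab : a ≤ b)
    (h : EqOn f (fun _ => c) (Ioo a b)) : IntervalIntegrable f MeasureTheory.volume a b :=
  (intervalIntegrable_congr_uIoo (uIoo_of_le hab ▸ h)).mpr intervalIntegrable_const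

lemma integral_of_eqOn_Ioo {f : ℝ → ℝ} {a b c : ℝ} (hab : a ≤ b)
    (h : EqOn f (fun _ => c) (Ioo a b)) : ∫ s in a..b, f s = (b - a) * c := by
  rw [integral_congr_Ioo_of_le hab h, integral_const, smul_eq_mul]

section Speed

variable {w₁ w₂ w₃ : ℝ} {γ : ℝ → Pt} {s : ℝ}

lemma speed_eq_of_eventuallyEq_affine {P V : Pt} (h : γ =ᶠ[𝓝 s] fun t => P + t • V) :
    speed w₁ w₂ w₃ γ s =
      √(w₁ ^ 2 * (cos (ptTheta (γ s)) * V.1 + sin (ptTheta (γ s)) * V.2.1) ^ 2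
        + w₂ ^ 2 * (-sin (ptTheta (γ s)) * V.1 + cos (ptTheta (γ s)) * V.2.1) ^ 2
        + w₃ ^ 2 * V.2.2 ^ 2) := by
  have hX : deriv (fun t => ptX (γ t)) s = V.1 :=
    (h.fun_comp ptX).deriv_eq.trans (by simp [ptX, Function.comp_def])
  have hY : deriv (fun t => ptY (γ t)) s = V.2.1 :=
    (h.fun_comp ptY).deriv_eq.trans (by simp [ptY, Function.comp_def])
  have hΘ : deriv (fun t => ptTheta (γ t)) s = V.2.2 :=
    (h.fun_comp ptTheta).deriv_eq.trans (by simp [ptTheta, Function.comp_def])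
  rw [speed, hX, hY, hΘ]

lemma speed_eq_of_eventuallyEq_turn (hw₃ : 0 ≤ w₃) {P : Pt} {ω : ℝ}
    (h : γ =ᶠ[𝓝 s] fun t => P + t • ((0 : ℝ), (0 : ℝ), ω)) :
    speed w₁ w₂ w₃ γ s = w₃ * |ω| := by
  rw [speed_eq_of_eventuallyEq_affine h]
  simp [sqrt_mul (sq_nonneg _), sqrt_sq hw₃, sqrt_sq_eq_abs]

lemma speed_eq_of_eventuallyEq_drive (hw₁ : 0 ≤ w₁) {a b φ v : ℝ}
    (h : γ =ᶠ[𝓝 s] fun t => (a, b, φ) + t • (v * cos φ, v * sin φ, (0 : ℝ))) :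
    speed w₁ w₂ w₃ γ s = w₁ * |v| := by
  have hheading : ptTheta (γ s) = φ := by rw [h.eq_of_nhds]; simp [ptTheta]
  have hfwd : cos φ * (v * cos φ) + sin φ * (v * sin φ) = v := by
    linear_combination v * cos_sq_add_sin_sq φ
  have hside : -sin φ * (v * cos φ) + cos φ * (v * sin φ) = 0 := by ring
  rw [speed_eq_of_eventuallyEq_affine h, hheading]
  simp only [hfwd, hside]
  simp [sqrt_mul (sq_nonneg _), sqrt_sq hw₁, sqrt_sq_eq_abs]

end Speed

lemma rDist_le_rLength {w₁ w₂ w₃ : ℝ} {p : Pt} {γ : ℝ → Pt} (hγ : PiecewiseC1On γ 0 1)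
    (h₀ : γ 0 = ((0 : ℝ), (0 : ℝ), (0 : ℝ))) (h₁ : EndsAt γ 1 p) :
    rDist w₁ w₂ w₃ p ≤ rLength w₁ w₂ w₃ γ 0 1 := by
  refine csInf_le ⟨0, ?_⟩ ⟨γ, hγ, h₀, h₁, rfl⟩
  rintro _ ⟨γ', -, -, -, rfl⟩
  exact integral_nonneg zero_le_one fun _ _ => sqrt_nonneg _

def turnDriveTurn (φ r θ : ℝ) : ℝ → Pt := fun s =>
  (max 0 (min 1 (3 * s - 1)) * (r * cos φ), max 0 (min 1 (3 * s - 1)) * (r * sin φ),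
    φ * min 1 (3 * s) + (θ - φ) * max 0 (3 * s - 2))

section TurnDriveTurn

variable {φ r θ s : ℝ}

lemma turnDriveTurn_zero : turnDriveTurn φ r θ 0 = ((0 : ℝ), (0 : ℝ), (0 : ℝ)) := by
  norm_num [turnDriveTurn]

lemma turnDriveTurn_one : turnDriveTurn φ r θ 1 = (r * cos φ, r * sin φ, θ) := by
  norm_num [turnDriveTurn]

lemma turnDriveTurn_eventuallyEq_of_lt (hs : s < 1 / 3) :
    turnDriveTurn φ r θ =ᶠ[𝓝 s] fun t => 0 + t • ((0 : ℝ), (0 : ℝ), 3 * φ) := by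
  filter_upwards [Iio_mem_nhds hs] with t (ht : t < 1 / 3)
  simp only [turnDriveTurn, min_eq_right (show 3 * t ≤ 1 by linarith),
    max_eq_left (show 3 * t - 2 ≤ 0 by linarith),
    max_eq_left (show min 1 (3 * t - 1) ≤ 0 from min_le_of_right_le (by linarith))]
  ext <;> simp
  ring

lemma turnDriveTurn_eventuallyEq_of_mem_Ioo (hs : s ∈ Ioo (1 / 3) (2 / 3)) :
    turnDriveTurn φ r θ =ᶠ[𝓝 s]
      fun t => (-(r * cos φ), -(r * sin φ), φ) + t • (3 * r * cos φ, 3 * r * sin φ, (0 : ℝ)) := by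
  filter_upwards [Ioo_mem_nhds hs.1 hs.2] with t ⟨ht₁, ht₂⟩
  simp only [turnDriveTurn, min_eq_left (show 1 ≤ 3 * t by linarith),
    min_eq_right (show 3 * t - 1 ≤ 1 by linarith), max_eq_right (show 0 ≤ 3 * t - 1 by linarith),
    max_eq_left (show 3 * t - 2 ≤ 0 by linarith)]
  ext <;> simp <;> ring

lemma turnDriveTurn_eventuallyEq_of_gt (hs : 2 / 3 < s) :
    turnDriveTurn φ r θ =ᶠ[𝓝 s]
      fun t => (r * cos φ, r * sin φ, 3 * φ - 2 * θ) + t • ((0 : ℝ), (0 : ℝ), 3 * (θ - φ)) := by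
  filter_upwards [Ioi_mem_nhds hs] with t (ht : 2 / 3 < t)
  simp only [turnDriveTurn, min_eq_left (show 1 ≤ 3 * t by linarith),
    min_eq_left (show 1 ≤ 3 * t - 1 by linarith), max_eq_right (zero_le_one' ℝ),
    max_eq_right (show 0 ≤ 3 * t - 2 by linarith)]
  ext <;> simp
  ring

lemma piecewiseC1On_turnDriveTurn : PiecewiseC1On (turnDriveTurn φ r θ) 0 1 := by
  refine ⟨Continuous.continuousOn (by unfold turnDriveTurn; fun_prop), {1 / 3, 2 / 3}, ?_⟩
  intro s _ hs
  simp only [Finset.mem_insert, Finset.mem_singleton, not_or] at hs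
  rcases lt_or_gt_of_ne hs.1 with h₁ | h₁
  · exact (turnDriveTurn_eventuallyEq_of_lt h₁).differentiableAt_iff.mpr (by fun_prop)
  rcases lt_or_gt_of_ne hs.2 with h₂ | h₂
  · exact (turnDriveTurn_eventuallyEq_of_mem_Ioo ⟨h₁, h₂⟩).differentiableAt_iff.mpr (by fun_prop)
  · exact (turnDriveTurn_eventuallyEq_of_gt h₂).differentiableAt_iff.mpr (by fun_prop)

lemma rLength_turnDriveTurn {w₁ w₂ w₃ : ℝ} (hw₁ : 0 ≤ w₁) (hw₃ : 0 ≤ w₃) :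
    rLength w₁ w₂ w₃ (turnDriveTurn φ r θ) 0 1 = w₃ * |φ| + w₁ * |r| + w₃ * |θ - φ| := by
  have h₁ : EqOn (speed w₁ w₂ w₃ (turnDriveTurn φ r θ)) (fun _ => w₃ * |3 * φ|)
      (Ioo 0 (1 / 3)) := fun _ hs =>
    speed_eq_of_eventuallyEq_turn hw₃ (turnDriveTurn_eventuallyEq_of_lt hs.2)
  have h₂ : EqOn (speed w₁ w₂ w₃ (turnDriveTurn φ r θ)) (fun _ => w₁ * |3 * r|)
      (Ioo (1 / 3) (2 / 3)) := fun _ hs =>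
    speed_eq_of_eventuallyEq_drive hw₁ (turnDriveTurn_eventuallyEq_of_mem_Ioo hs)
  have h₃ : EqOn (speed w₁ w₂ w₃ (turnDriveTurn φ r θ)) (fun _ => w₃ * |3 * (θ - φ)|)
      (Ioo (2 / 3) 1) := fun _ hs =>
    speed_eq_of_eventuallyEq_turn hw₃ (turnDriveTurn_eventuallyEq_of_gt hs.1)
  have i₁ := intervalIntegrable_of_eqOn_Ioo (by norm_num) h₁
  have i₂ := intervalIntegrable_of_eqOn_Ioo (by norm_num) h₂
  have i₃ := intervalIntegrable_of_eqOn_Ioo (by norm_num) h₃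
  rw [rLength, ← integral_add_adjacent_intervals (i₁.trans i₂) i₃,
    ← integral_add_adjacent_intervals i₁ i₂, integral_of_eqOn_Ioo (by norm_num) h₁,
    integral_of_eqOn_Ioo (by norm_num) h₂, integral_of_eqOn_Ioo (by norm_num) h₃]
  norm_num [abs_mul]
  ring

end TurnDriveTurn

theorem second_global_upper_bound_on_distance_general
    (w₁ w₂ w₃ : ℝ) (hw₁ : 0 < w₁) (hw₃ : 0 < w₃)
    (p : Pt) (hp : ptTheta p ∈ Set.Icc (-Real.pi) Real.pi) :
    rDist w₁ w₂ w₃ p ≤ u2Bnd w₁ w₃ p := by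
  obtain ⟨r, φ, hx, hy, hφ⟩ := exists_polar_angle_mem_Ico (ptX p) (ptY p) ((ptTheta p - π) / 2)
  have hend : EndsAt (turnDriveTurn φ r (ptTheta p)) 1 p :=
    ⟨0, by rw [turnDriveTurn_one, ← hx, ← hy]; simp [ptX, ptY, ptTheta]⟩
  have hnorm : √(ptX p ^ 2 + ptY p ^ 2) = |r| := by
    rw [hx, hy, ← sqrt_sq_eq_abs]
    congr 1
    linear_combination r ^ 2 * cos_sq_add_sin_sq φ
  have hturns : |φ| + |ptTheta p - φ| ≤ π :=
    abs_add_abs_sub_le_of_abs_le (abs_le.2 hp) (by linarith [hφ.1]) (by linarith [hφ.2])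
  calc rDist w₁ w₂ w₃ p ≤ rLength w₁ w₂ w₃ (turnDriveTurn φ r (ptTheta p)) 0 1 :=
        rDist_le_rLength piecewiseC1On_turnDriveTurn turnDriveTurn_zero hend
    _ = w₃ * |φ| + w₁ * |r| + w₃ * |ptTheta p - φ| := rLength_turnDriveTurn hw₁.le hw₃.le
    _ ≤ u2Bnd w₁ w₃ p := by rw [u2Bnd, hnorm]; nlinarith

theorem second_global_upper_bound_on_distance
    (w₁ w₂ w₃ : ℝ) (hw₁ : 0 < w₁) (hw₂ : 0 < w₂) (hw₃ : 0 < w₃) (h12 : w₁ ≤ w₂)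
    (p : Pt) (hp : ptTheta p ∈ Set.Icc (-Real.pi) Real.pi) :
    rDist w₁ w₂ w₃ p ≤ u2Bnd w₁ w₃ p :=
  second_global_upper_bound_on_distance_general w₁ w₂ w₃ hw₁ hw₃ p hp

end
end
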